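/- For every real number R > 0 and every integer n ≥ 1, the sum over all tuples (k_1,…,k_n) of nonnegative integers satisfying k_1 + 2k_2 + ⋯ + n k_n = n of (k_1+k_2+⋯+k_n)!/(k_1! k_2! ⋯ k_n!) · R^{k_1+k_2+⋯+k_n} equals R(R+1)^{n-1}. -/

import Mathlib

/-!
Writing the multinomial coefficient as the number of orderings of a partition, the sum `S(m)`
counts compositions of `m` (ordered sequences of positive parts, here of size at most `n`),
each weighted by `R ^ (number of parts)`. Removing the first part gives
`S(m) = R * ∑_{a < m} S(a)`; on multinomial coefficients this is the Pascal-type rule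
`multinomial k = ∑_j multinomial (k - e_j)`. Hence `S(1) = R` and `S(m + 2) = (R + 1) S(m + 1)`.
-/

open Finset Function

namespace Nat

variable {α : Type*}

theorem cast_multinomial {K : Type*} [Semifield K] [CharZero K] (s : Finset α) (f : α → ℕ) :
    (multinomial s f : K) = (∑ i ∈ s, f i)! / ∏ i ∈ s, ((f i)! : K) := by
  rw [eq_div_iff (prod_ne_zero_iff.2 fun i _ => cast_ne_zero.2 (factorial_ne_zero (f i))),
    ← cast_prod, ← cast_mul, mul_comm, multinomial_spec]

variable [DecidableEq α] {s : Finset α} {f : α → ℕ} {j : α}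

theorem sum_update_pred (hj : j ∈ s) (hfj : f j ≠ 0) :
    ∑ i ∈ s, update f j (f j - 1) i = ∑ i ∈ s, f i - 1 := by
  have := add_sum_erase s f hj
  rw [sum_update_of_mem hj, sdiff_singleton_eq_erase]
  omega

theorem prod_factorial_mul_multinomial_update_pred (hj : j ∈ s) (hfj : f j ≠ 0) :
    (∏ i ∈ s, (f i)!) * multinomial s (update f j (f j - 1)) = f j * (∑ i ∈ s, f i - 1)! := by
  have hprod : ∏ i ∈ s, (f i)! = f j * ∏ i ∈ s, (update f j (f j - 1) i)! := by
    have herase : ∏ i ∈ s.erase j, (update f j (f j - 1) i)! = ∏ i ∈ s.erase j, (f i)! :=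
      prod_congr rfl fun i hi => by rw [update_of_ne (ne_of_mem_erase hi)]
    rw [← mul_prod_erase s _ hj, ← mul_prod_erase s (fun i => (update f j (f j - 1) i)!) hj,
      herase, update_self, ← mul_assoc, mul_factorial_pred hfj]
  rw [hprod, mul_assoc, multinomial_spec, sum_update_pred hj hfj]

theorem multinomial_eq_sum_multinomial_update_pred (hf : ∑ i ∈ s, f i ≠ 0) :
    multinomial s f = ∑ j ∈ s with f j ≠ 0, multinomial s (update f j (f j - 1)) := by
  apply Nat.eq_of_mul_eq_mul_left (prod_pos fun i _ => factorial_pos (f i))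
  rw [multinomial_spec, mul_sum, sum_congr rfl fun j hj =>
      prod_factorial_mul_multinomial_update_pred (mem_filter.1 hj).1 (mem_filter.1 hj).2,
    ← sum_mul, sum_filter_ne_zero, mul_factorial_pred hf]

end Nat

variable {N : ℕ}

def partSum (k : Fin N → ℕ) : ℕ := ∑ i, (i.1 + 1) * k i

theorem partSum_update_succ (k : Fin N → ℕ) (j : Fin N) :
    partSum (update k j (k j + 1)) = partSum k + (j.1 + 1) := by
  have herase : ∑ i ∈ univ.erase j, (i.1 + 1) * update k j (k j + 1) i
      = ∑ i ∈ univ.erase j, (i.1 + 1) * k i :=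
    sum_congr rfl fun i hi => by rw [update_of_ne (ne_of_mem_erase hi)]
  rw [partSum, partSum, ← add_sum_erase _ _ (mem_univ j), ← add_sum_erase _ _ (mem_univ j), herase,
    update_self]
  ring

theorem partSum_update_pred_add {k : Fin N → ℕ} {j : Fin N} (hkj : k j ≠ 0) :
    partSum (update k j (k j - 1)) + (j.1 + 1) = partSum k := by
  have h := partSum_update_succ (update k j (k j - 1)) j
  rwa [update_self, update_idem, Nat.sub_add_cancel (Nat.one_le_iff_ne_zero.2 hkj), update_eq_self,
    eq_comm] at h

theorem le_partSum (k : Fin N → ℕ) (j : Fin N) : k j ≤ partSum k :=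
  (Nat.le_mul_of_pos_left _ j.1.succ_pos).trans
    (single_le_sum (f := fun i : Fin N => (i.1 + 1) * k i) (fun _ _ => Nat.zero_le _) (mem_univ j))

/-- `k i` is the multiplicity of the part `i + 1`; the bound `k i ≤ m` is automatic
(`mem_partMultiplicities`) and only serves to make the set finite. -/
def partMultiplicities (N m : ℕ) : Finset (Fin N → ℕ) :=
  {k ∈ Fintype.piFinset fun _ => range (m + 1) | partSum k = m}

theorem mem_partMultiplicities {m : ℕ} {k : Fin N → ℕ} :
    k ∈ partMultiplicities N m ↔ partSum k = m := by
  simp only [partMultiplicities, mem_filter, Fintype.mem_piFinset, mem_range, and_iff_right_iff_imp]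
  rintro rfl j
  exact Nat.lt_succ_of_le (le_partSum k j)

theorem partMultiplicities_zero (N : ℕ) : partMultiplicities N 0 = {0} := by
  ext k
  rw [mem_partMultiplicities, mem_singleton]
  refine ⟨fun hk => funext fun j => Nat.le_zero.1 (hk ▸ le_partSum k j), ?_⟩
  rintro rfl
  simp [partSum]

theorem sum_partMultiplicities_update_pred {A : Type*} [AddCommMonoid A] (g : (Fin N → ℕ) → A)
    (m : ℕ) (j : Fin N) :
    ∑ k ∈ partMultiplicities N m with k j ≠ 0, g (update k j (k j - 1)) =
      if j.1 + 1 ≤ m then ∑ k ∈ partMultiplicities N (m - (j.1 + 1)), g k else 0 := by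
  split_ifs with hjm
  · refine sum_nbij' (fun k => update k j (k j - 1)) (fun k => update k j (k j + 1))
      (fun k hk => ?_) (fun k hk => ?_) (fun k hk => ?_) (fun k _ => ?_) (fun _ _ => rfl)
    · rw [mem_filter, mem_partMultiplicities] at hk
      rw [mem_partMultiplicities]
      have := partSum_update_pred_add hk.2
      omega
    · rw [mem_partMultiplicities] at hk
      rw [mem_filter, mem_partMultiplicities, partSum_update_succ, update_self]
      omega
    · rw [mem_filter] at hk
      rw [update_idem, update_self, Nat.sub_add_cancel (Nat.one_le_iff_ne_zero.2 hk.2),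
        update_eq_self]
    · rw [update_idem, update_self, Nat.add_sub_cancel, update_eq_self]
  · refine sum_eq_zero fun k hk => absurd ?_ hjm
    rw [mem_filter, mem_partMultiplicities] at hk
    have := partSum_update_pred_add hk.2
    omega

variable {A : Type*} [CommSemiring A]

def compositionWeight {ι : Type*} [Fintype ι] (x : A) (k : ι → ℕ) : A :=
  Nat.multinomial univ k * x ^ ∑ i, k i

theorem compositionWeight_eq_mul_sum {ι : Type*} [Fintype ι] [DecidableEq ι] (x : A) {k : ι → ℕ}
    (hk : ∑ i, k i ≠ 0) :
    compositionWeight x k = x * ∑ j with k j ≠ 0, compositionWeight x (update k j (k j - 1)) := by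
  rw [compositionWeight, Nat.multinomial_eq_sum_multinomial_update_pred hk, Nat.cast_sum, sum_mul,
    mul_sum]
  refine sum_congr rfl fun j hj => ?_
  rw [compositionWeight, Nat.sum_update_pred (mem_univ j) (mem_filter.1 hj).2,
    ← Nat.sub_add_cancel (Nat.one_le_iff_ne_zero.2 hk), pow_succ, Nat.add_sub_cancel]
  ring

def compositionSum (x : A) (N m : ℕ) : A :=
  ∑ k ∈ partMultiplicities N m, compositionWeight x k

theorem compositionSum_zero (x : A) (N : ℕ) : compositionSum x N 0 = 1 := by
  simp [compositionSum, partMultiplicities_zero, compositionWeight, Nat.multinomial]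

theorem compositionSum_eq_mul_sum_range (x : A) {m : ℕ} (hm : m ≠ 0) (hmN : m ≤ N) :
    compositionSum x N m = x * ∑ a ∈ range m, compositionSum x N a := by
  have hk : ∀ k ∈ partMultiplicities N m, ∑ i, k i ≠ 0 := by
    intro k hk hk0
    rw [mem_partMultiplicities, partSum, sum_eq_zero fun i _ => by
      rw [(sum_eq_zero_iff.1 hk0) i (mem_univ i), mul_zero]] at hk
    exact hm hk.symm
  have hrange : {a ∈ range N | a + 1 ≤ m} = range m := by
    ext a
    simp only [mem_filter, mem_range]
    omega
  calc compositionSum x N m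
      = x * ∑ j, ∑ k ∈ partMultiplicities N m with k j ≠ 0,
          compositionWeight x (update k j (k j - 1)) := by
        rw [compositionSum, sum_congr rfl fun k hk' => compositionWeight_eq_mul_sum x (hk k hk'),
          ← mul_sum]
        simp only [sum_filter]
        rw [sum_comm]
    _ = x * ∑ j : Fin N, if j.1 + 1 ≤ m then compositionSum x N (m - (j.1 + 1)) else 0 := by
        simp only [sum_partMultiplicities_update_pred, compositionSum]
    _ = x * ∑ a ∈ range m, compositionSum x N a := by
        rw [Fin.sum_univ_eq_sum_range (fun a => if a + 1 ≤ m then compositionSum x N (m - (a + 1))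
          else 0), ← sum_filter, hrange, ← sum_range_reflect (compositionSum x N) m]
        refine congrArg _ (sum_congr rfl fun a ha => congrArg _ ?_)
        have := mem_range.1 ha
        omega

theorem compositionSum_succ (x : A) {m : ℕ} (hm : m + 1 ≤ N) :
    compositionSum x N (m + 1) = x * (x + 1) ^ m := by
  induction m with
  | zero =>
    rw [zero_add] at hm ⊢
    rw [compositionSum_eq_mul_sum_range x one_ne_zero hm, sum_range_one, compositionSum_zero]
    simp
  | succ m ih =>
    have hrec := compositionSum_eq_mul_sum_range x (N := N) (m := m + 1) m.succ_ne_zero (by omega)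
    rw [compositionSum_eq_mul_sum_range x (m + 1).succ_ne_zero hm, sum_range_succ, mul_add, ← hrec,
      ih (by omega)]
    ring

theorem stmt_0_general (R : ℝ) (n : ℕ) (hn : 1 ≤ n) :
    ∑ k ∈ Finset.univ.filter
        (fun k : Fin n → Fin (n + 1) => ∑ i, (i.1 + 1) * (k i).1 = n),
      ((Nat.factorial (∑ i, (k i).1) : ℝ) /
          ∏ i, (Nat.factorial ((k i).1) : ℝ)) * R ^ (∑ i, (k i).1)
      = R * (R + 1) ^ (n - 1) := by
  rw [← compositionSum_succ R (Nat.sub_add_cancel hn).le, Nat.sub_add_cancel hn, compositionSum]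
  have hval : ∀ k ∈ partMultiplicities n n, ∀ i, (Fin.ofNat (n + 1) (k i)).val = k i :=
    fun k hk i => Nat.mod_eq_of_lt (Nat.lt_succ_of_le (mem_partMultiplicities.1 hk ▸ le_partSum k i))
  refine sum_nbij' (fun k i => (k i).1) (fun k i => Fin.ofNat (n + 1) (k i)) (fun k hk => ?_)
    (fun k hk => ?_) (fun k _ => funext fun i => Fin.ofNat_val_eq_self (k i))
    (fun k hk => funext (hval k hk)) (fun k _ => ?_)
  · exact mem_partMultiplicities.2 (mem_filter.1 hk).2
  · simp only [mem_filter, mem_univ, true_and, hval k hk]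
    exact mem_partMultiplicities.1 hk
  · rw [compositionWeight, Nat.cast_multinomial]

/-- **Faà di Bruno counting identity.** For every real `R > 0` and integer `n ≥ 1`,
the sum over all tuples `(k₁,…,kₙ)` of nonnegative integers with
`k₁ + 2k₂ + ⋯ + n kₙ = n` of `(k₁+⋯+kₙ)!/(k₁!⋯kₙ!) · R^(k₁+⋯+kₙ)`
equals `R (R+1)^(n-1)`. (The values `kᵢ ≤ n` automatically, so we range over
`Fin n → Fin (n+1)`.) -/
theorem stmt_0 (R : ℝ) (hR : 0 < R) (n : ℕ) (hn : 1 ≤ n) :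
    ∑ k ∈ Finset.univ.filter
        (fun k : Fin n → Fin (n + 1) => ∑ i, (i.1 + 1) * (k i).1 = n),
      ((Nat.factorial (∑ i, (k i).1) : ℝ) /
          ∏ i, (Nat.factorial ((k i).1) : ℝ)) * R ^ (∑ i, (k i).1)
      = R * (R + 1) ^ (n - 1) :=
  stmt_0_general R n hn
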